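/- If G is a finite simple 2-connected chordal graph, then the Radon number of G with respect to Δ-convexity satisfies r_Δ(G) = max{2, α(G)}. -/

import Mathlib

variable {V : Type*}

/-- A set `S` is Δ-convex in `G` if every vertex adjacent to two adjacent vertices of `S`
belongs to `S`. -/
def DeltaConvex (G : SimpleGraph V) (S : Set V) : Prop :=
  ∀ ⦃u v w : V⦄, u ∈ S → v ∈ S → G.Adj u v → G.Adj w u → G.Adj w v → w ∈ S

/-- The Δ-convex hull of `S`: the smallest Δ-convex set containing `S`. -/
def deltaHull (G : SimpleGraph V) (S : Set V) : Set V :=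
  ⋂₀ {T : Set V | S ⊆ T ∧ DeltaConvex G T}

/-- `S` is Helly independent: the intersection of the hulls of the sets `S \ {a}`, `a ∈ S`,
is empty. -/
def HellyIndep (G : SimpleGraph V) (S : Set V) : Prop :=
  (⋂ a ∈ S, deltaHull G (S \ {a})) = ∅

/-- The Helly number of `G` w.r.t. Δ-convexity: the maximum cardinality of a Helly
independent subset of the vertex set. -/
noncomputable def hellyNumber (G : SimpleGraph V) : ℕ :=
  sSup {n : ℕ | ∃ S : Set V, HellyIndep G S ∧ S.ncard = n}

/-- `S` is Radon independent: no partition of `S` into two nonempty disjoint parts has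
intersecting hulls. -/
def RadonIndep (G : SimpleGraph V) (S : Set V) : Prop :=
  ¬ ∃ S₁ S₂ : Set V, S₁ ∪ S₂ = S ∧ Disjoint S₁ S₂ ∧ S₁.Nonempty ∧ S₂.Nonempty ∧
    (deltaHull G S₁ ∩ deltaHull G S₂).Nonempty

/-- The Radon number of `G` w.r.t. Δ-convexity. -/
noncomputable def radonNumber (G : SimpleGraph V) : ℕ :=
  sSup {n : ℕ | ∃ S : Set V, RadonIndep G S ∧ S.ncard = n}

/-- `S` is convexly independent: `a ∉ ⟨S \ {a}⟩` for every `a ∈ S`. -/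
def ConvIndep (G : SimpleGraph V) (S : Set V) : Prop :=
  ∀ a ∈ S, a ∉ deltaHull G (S \ {a})

/-- The rank of `G` w.r.t. Δ-convexity. -/
noncomputable def rankDelta (G : SimpleGraph V) : ℕ :=
  sSup {n : ℕ | ∃ S : Set V, ConvIndep G S ∧ S.ncard = n}

/-- The independence number: maximum cardinality of a set of pairwise non-adjacent
vertices. -/
noncomputable def alphaNum (G : SimpleGraph V) : ℕ :=
  sSup {n : ℕ | ∃ S : Set V, S.Pairwise (fun a b => ¬ G.Adj a b) ∧ S.ncard = n}

/-- `G` is 2-connected: at least 3 vertices, connected, and deleting any single vertex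
leaves a connected graph. -/
def TwoConnected (G : SimpleGraph V) : Prop :=
  3 ≤ Nat.card V ∧ G.Connected ∧ ∀ v : V, (G.induce {u : V | u ≠ v}).Connected

/-- `G` is chordal: every cycle of length at least 4 has a chord, i.e. an edge of `G`
joining two vertices of the cycle that is not an edge of the cycle. -/
def ChordalGraph (G : SimpleGraph V) : Prop :=
  ∀ (v : V) (c : G.Walk v v), c.IsCycle → 4 ≤ c.length →
    ∃ x y : V, x ∈ c.support ∧ y ∈ c.support ∧ G.Adj x y ∧ s(x, y) ∉ c.edges

/-- `B` induces a connected subgraph of `G` with at least two vertices and no cut vertex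
(so: an edge, or a 2-connected subgraph). -/
def NoCutSet (G : SimpleGraph V) (B : Set V) : Prop :=
  2 ≤ B.ncard ∧ (G.induce B).Connected ∧ ∀ v ∈ B, (G.induce (B \ {v})).Connected

/-- `B` is (the vertex set of) a block of `G`: a maximal 2-connected subgraph, where a
bridge together with its endpoints also counts as a block. -/
def IsBlock (G : SimpleGraph V) (B : Set V) : Prop :=
  NoCutSet G B ∧ ∀ B' : Set V, NoCutSet G B' → B ⊆ B' → B = B'

/-- The set `B` induces a complete subgraph of `G`. -/
def CompleteOn (G : SimpleGraph V) (B : Set V) : Prop :=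
  ∀ u ∈ B, ∀ v ∈ B, u ≠ v → G.Adj u v

/-!
Independent sets are Δ-convex, so they, like all pairs of vertices, are Radon independent; this
gives `max 2 α(G) ≤ r_Δ(G)`. Conversely, in a 2-connected chordal graph the hull `H` of an edge is
everything. Otherwise, since `H` is connected, one can leave `H` along an edge `a - x` and, by
2-connectivity, return to `H` from `x` avoiding `a`; closing this ear by a walk inside `H` gives a
cycle. A chord of a shortest such cycle (chordality) always yields a shorter one, while a cycle of
length three is a triangle over an edge of `H`, whose tip a Δ-convex set contains. Hence an edge
`p - q` in a set `S` of three or more vertices makes `{p, q}`, `S \ {p, q}` a Radon partition.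
-/

open SimpleGraph Walk

section DeltaHull

variable {G : SimpleGraph V} {S T : Set V}

lemma subset_deltaHull : S ⊆ deltaHull G S := fun _ hx _ hT => hT.1 hx

lemma deltaConvex_deltaHull : DeltaConvex G (deltaHull G S) :=
  fun _ _ _ hu hv huv hwu hwv T hT => hT.2 (hu T hT) (hv T hT) huv hwu hwv

lemma deltaHull_subset (hST : S ⊆ T) (hT : DeltaConvex G T) : deltaHull G S ⊆ T :=
  fun _ hx => hx T ⟨hST, hT⟩

lemma deltaHull_eq_self_of_pairwise (hS : S.Pairwise fun a b => ¬ G.Adj a b) :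
    deltaHull G S = S :=
  (deltaHull_subset subset_rfl fun _ _ _ hu hv huv _ _ => absurd huv (hS hu hv huv.ne)).antisymm
    subset_deltaHull

lemma exists_walk_of_mem_deltaHull {u w : V}
    (hS : ∀ s ∈ S, ∃ p : G.Walk s u, ∀ z ∈ p.support, z ∈ deltaHull G S)
    (hw : w ∈ deltaHull G S) : ∃ p : G.Walk w u, ∀ z ∈ p.support, z ∈ deltaHull G S := by
  refine deltaHull_subset (T := {w | ∃ p : G.Walk w u, ∀ z ∈ p.support, z ∈ deltaHull G S})
    hS ?_ hw
  rintro a b w ⟨p, hp⟩ ⟨q, hq⟩ hab hwa hwb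
  have hw : w ∈ deltaHull G S :=
    deltaConvex_deltaHull (hp a p.start_mem_support) (hq b q.start_mem_support) hab hwa hwb
  refine ⟨.cons hwa p, fun z hz => ?_⟩
  rcases List.mem_cons.mp (support_cons hwa p ▸ hz) with rfl | hz
  exacts [hw, hp z hz]

end DeltaHull

namespace SimpleGraph.Walk

variable {G : SimpleGraph V} {u v x y : V}

lemma two_le_length_of_ne_of_notMem_edges {p : G.Walk u v} (hne : u ≠ v)
    (he : s(u, v) ∉ p.edges) : 2 ≤ p.length := by
  cases p with
  | nil => exact absurd rfl hne
  | cons h q =>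
    cases q with
    | nil => simp at he
    | cons => simp

lemma mem_support_dropUntil_or [DecidableEq V] {p : G.Walk u v} (hx : x ∈ p.support)
    (hy : y ∈ p.support) :
    y ∈ (p.dropUntil x hx).support ∨ x ∈ (p.dropUntil y hy).support := by
  induction p with
  | nil =>
    rw [mem_support_nil_iff] at hx hy
    subst hx hy
    simp
  | @cons w _ _ h q ih =>
    by_cases hwx : w = x
    · subst hwx
      exact .inl (by rwa [dropUntil_first])
    by_cases hwy : w = y
    · subst hwy
      exact .inr (by rwa [dropUntil_first])
    have hx' : x ∈ q.support := by simp_all [eq_comm]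
    have hy' : y ∈ q.support := by simp_all [eq_comm]
    simpa [dropUntil, hwx, hwy] using ih hx' hy'

lemma IsPath.end_notMem_support_takeUntil [DecidableEq V] {p : G.Walk u v} (hp : p.IsPath)
    (hx : x ∈ p.support) (hxv : x ≠ v) : v ∉ (p.takeUntil x hx).support := fun hv =>
  (take_spec p hx ▸ hp).ne_of_mem_support_of_append hxv.symm hv (end_mem_support _) rfl

/-- The chord `s(x, y)` lets a walk skip the stretch between `x` and `y`, of length at least
two since `s(x, y)` is not an edge of the walk. -/
lemma exists_length_lt_of_isChord {p : G.Walk u v} (h : p.IsChord s(x, y)) :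
    ∃ q : G.Walk u v, q.length < p.length ∧ q.support ⊆ p.support ∧
      q.edges ⊆ s(x, y) :: p.edges := by
  classical
  rw [isChord_sym2Mk] at h
  obtain ⟨hxy, he, hx, hy⟩ := h
  wlog hyx : y ∈ (p.dropUntil x hx).support generalizing x y
  · obtain ⟨q, hlt, hsupp, hedges⟩ :=
      this hxy.symm (by rwa [Sym2.eq_swap]) hy hx
        ((mem_support_dropUntil_or hx hy).resolve_left hyx)
    exact ⟨q, hlt, hsupp, by rwa [Sym2.eq_swap]⟩
  generalize hd : p.dropUntil x hx = d at hyx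
  refine ⟨(p.takeUntil x hx).append (cons hxy (d.dropUntil y hyx)), ?_, ?_, ?_⟩
  · have hp := congrArg length (take_spec p hx)
    have hd' := congrArg length (take_spec d hyx)
    have h2 : 2 ≤ (d.takeUntil y hyx).length :=
      two_le_length_of_ne_of_notMem_edges hxy.ne fun hmem => he <|
        edges_dropUntil_subset_edges p hx (hd ▸ edges_takeUntil_subset_edges d hyx hmem)
    rw [hd] at hp
    simp only [length_append, length_cons] at hp hd' ⊢
    omega
  · intro z hz
    simp only [mem_support_append_iff, support_cons, List.mem_cons] at hz
    rcases hz with hz | rfl | hz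
    · exact support_takeUntil_subset_support p hx hz
    · exact hx
    · exact support_dropUntil_subset_support p hx
        (hd ▸ support_dropUntil_subset_support d hyx hz)
  · intro e he
    simp only [edges_append, edges_cons, List.mem_append, List.mem_cons] at he
    rcases he with he | rfl | he
    · exact List.mem_cons_of_mem _ (edges_takeUntil_subset_edges p hx he)
    · exact List.mem_cons_self
    · exact List.mem_cons_of_mem _
        (edges_dropUntil_subset_edges p hx (hd ▸ edges_dropUntil_subset_edges d hyx he))

lemma exists_walk_to_first_mem {S : Set V} (p : G.Walk u v) (hv : v ∈ S) :
    ∃ w ∈ S, ∃ q : G.Walk u w, q.support ⊆ p.support ∧ ∀ z ∈ q.support, z ∈ S → z = w := by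
  induction p with
  | nil => exact ⟨_, hv, nil, by simp, by simp⟩
  | @cons w _ _ h p ih =>
    by_cases hw : w ∈ S
    · exact ⟨w, hw, nil, by simp, by simp⟩
    obtain ⟨b, hb, q, hsupp, hfirst⟩ := ih hv
    refine ⟨b, hb, cons h q, List.cons_subset_cons _ hsupp, ?_⟩
    rintro z hz hzS
    rcases List.mem_cons.mp (support_cons h q ▸ hz) with rfl | hz
    · exact absurd hzS hw
    · exact hfirst z hz hzS

end SimpleGraph.Walk

/-- An ear of `H`: a walk `outer` leaving `H` at `src` and re-entering it only at `dst ≠ src`,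
not through the edge `s(src, dst)`, closed up by a walk `inner` inside `H`. -/
structure Ear (G : SimpleGraph V) (H : Set V) where
  src : V
  dst : V
  outer : G.Walk src dst
  inner : G.Walk dst src
  src_ne_dst : src ≠ dst
  edge_notMem_outer : s(src, dst) ∉ outer.edges
  eq_of_mem_outer : ∀ w ∈ outer.support, w ∈ H → w = src ∨ w = dst
  inner_subset : ∀ w ∈ inner.support, w ∈ H

namespace Ear

variable {G : SimpleGraph V} {H : Set V} (E : Ear G H) {x y : V}

def length : ℕ := E.outer.length + E.inner.length

lemma src_mem : E.src ∈ H := E.inner_subset _ E.inner.end_mem_support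

lemma dst_mem : E.dst ∈ H := E.inner_subset _ E.inner.start_mem_support

lemma two_le_length_outer : 2 ≤ E.outer.length :=
  two_le_length_of_ne_of_notMem_edges E.src_ne_dst E.edge_notMem_outer

lemma one_le_length_inner : 1 ≤ E.inner.length :=
  Nat.one_le_iff_ne_zero.mpr fun h => E.src_ne_dst (eq_of_length_eq_zero h).symm

/-- The shortest ears are triangles `src - w - dst` over an edge of `H`, and a Δ-convex set
absorbs their tip `w`. -/
lemma four_le_length (hH : DeltaConvex G H) : 4 ≤ E.length := by
  have h2 := E.two_le_length_outer
  have h1 := E.one_le_length_inner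
  by_contra! hlt
  have hP : E.outer.length = 2 := by unfold length at hlt; omega
  have hQ : E.inner.length = 1 := by unfold length at hlt; omega
  set w := E.outer.getVert 1
  have haw : G.Adj E.src w := by
    simpa using E.outer.adj_getVert_succ (i := 0) (by omega)
  have hwb : G.Adj w E.dst := by
    simpa [← hP, getVert_length] using E.outer.adj_getVert_succ (i := 1) (by omega)
  have hw : w ∈ H := hH E.src_mem E.dst_mem (adj_of_length_eq_one hQ).symm haw.symm hwb
  rcases E.eq_of_mem_outer w (getVert_mem_support _ _) hw with h | h
  · exact haw.ne h.symm
  · exact hwb.ne h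

def bypass [DecidableEq V] : Ear G H where
  src := E.src
  dst := E.dst
  outer := E.outer.bypass
  inner := E.inner.bypass
  src_ne_dst := E.src_ne_dst
  edge_notMem_outer h := E.edge_notMem_outer (edges_bypass_subset_edges _ h)
  eq_of_mem_outer w hw := E.eq_of_mem_outer w (support_bypass_subset_support _ hw)
  inner_subset w hw := E.inner_subset w (support_bypass_subset_support _ hw)

lemma length_bypass_le [DecidableEq V] : E.bypass.length ≤ E.length :=
  add_le_add (length_bypass_le_length _) (length_bypass_le_length _)

lemma isCycle_append (hP : E.outer.IsPath) (hQ : E.inner.IsPath) :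
    (E.outer.append E.inner).IsCycle := by
  refine hP.isCycle_append hQ (fun z hzP hzQ => ?_) (by have := E.two_le_length_outer; omega)
  rcases E.eq_of_mem_outer z (List.mem_of_mem_tail hzP)
    (E.inner_subset z (List.mem_of_mem_tail hzQ)) with rfl | rfl
  · exact List.nodup_cons.mp (E.outer.cons_tail_support ▸ hP.support_nodup) |>.1 hzP
  · exact List.nodup_cons.mp (E.inner.cons_tail_support ▸ hQ.support_nodup) |>.1 hzQ

lemma exists_length_lt_of_isChord_inner (h : E.inner.IsChord s(x, y)) :
    ∃ E' : Ear G H, E'.length < E.length := by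
  obtain ⟨q, hlt, hsupp, -⟩ := exists_length_lt_of_isChord h
  exact ⟨{ E with inner := q, inner_subset := fun w hw => E.inner_subset w (hsupp hw) },
    by unfold length; dsimp only; omega⟩

lemma exists_length_lt_of_isChord_outer (h : E.outer.IsChord s(x, y))
    (hne : s(x, y) ≠ s(E.src, E.dst)) : ∃ E' : Ear G H, E'.length < E.length := by
  obtain ⟨q, hlt, hsupp, hedges⟩ := exists_length_lt_of_isChord h
  refine ⟨{ E with
    outer := q
    edge_notMem_outer := fun he => ?_
    eq_of_mem_outer := fun w hw => E.eq_of_mem_outer w (hsupp hw) }, ?_⟩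
  · rcases List.mem_cons.mp (hedges he) with he | he
    exacts [hne he.symm, E.edge_notMem_outer he]
  · unfold length; dsimp only; omega

/-- An edge from an outer vertex `x` off `H` to an inner vertex `y` off the outer walk splits
the ear into a shorter one: outer walk `src ⋯ x - y`, inner walk `y ⋯ src`. -/
lemma exists_length_lt_of_adj [DecidableEq V] (hP : E.outer.IsPath)
    (hx : x ∈ E.outer.support) (hxQ : x ∉ E.inner.support)
    (hy : y ∈ E.inner.support) (hyP : y ∉ E.outer.support) (hxy : G.Adj x y) :
    ∃ E' : Ear G H, E'.length < E.length := by
  have hxa : x ≠ E.src := fun h => hxQ (h ▸ E.inner.end_mem_support)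
  have hxb : x ≠ E.dst := fun h => hxQ (h ▸ E.inner.start_mem_support)
  have hyb : y ≠ E.dst := fun h => hyP (h ▸ E.outer.end_mem_support)
  let T := E.outer.takeUntil x hx
  have hT : T.support ⊆ E.outer.support := support_takeUntil_subset_support _ hx
  refine ⟨{
    src := E.src
    dst := y
    outer := T.concat hxy
    inner := E.inner.dropUntil y hy
    src_ne_dst := fun h => hyP (h ▸ E.outer.start_mem_support)
    edge_notMem_outer := fun he => ?_
    eq_of_mem_outer := fun w hw hwH => ?_
    inner_subset := fun w hw => E.inner_subset w (support_dropUntil_subset_support _ hy hw) }, ?_⟩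
  · rw [edges_concat, List.concat_eq_append, List.mem_append, List.mem_singleton] at he
    rcases he with he | he
    · exact hyP (hT (T.snd_mem_support_of_mem_edges he))
    · rcases Sym2.eq_iff.mp he with ⟨h, -⟩ | ⟨h, -⟩
      exacts [hxa h.symm, hyP (h ▸ E.outer.start_mem_support)]
  · rw [support_concat, List.mem_append, List.mem_singleton] at hw
    rcases hw with hw | rfl
    · rcases E.eq_of_mem_outer w (hT hw) hwH with rfl | rfl
      · exact .inl rfl
      · exact absurd hw (hP.end_notMem_support_takeUntil hx hxb)
    · exact .inr rfl
  · have := length_takeUntil_lt_length hx hxb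
    have := length_dropUntil_lt_length hy hyb
    unfold length
    simp only [length_concat, T]
    omega

/-- In a cycle built from an ear, a chord (which exists by chordality) shortcuts the inner walk,
shortcuts the outer walk, or splits the ear. -/
lemma exists_length_lt_of_isPath (hch : ChordalGraph G) (hH : DeltaConvex G H)
    (hP : E.outer.IsPath) (hQ : E.inner.IsPath) : ∃ E' : Ear G H, E'.length < E.length := by
  classical
  obtain ⟨x, y, hx, hy, hxy, he⟩ := hch _ _ (E.isCycle_append hP hQ)
    (by rw [length_append]; exact E.four_le_length hH)
  rw [mem_support_append_iff] at hx hy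
  rw [edges_append, List.mem_append, not_or] at he
  by_cases hQxy : x ∈ E.inner.support ∧ y ∈ E.inner.support
  · exact E.exists_length_lt_of_isChord_inner (isChord_sym2Mk.mpr ⟨hxy, he.2, hQxy⟩)
  by_cases hPxy : x ∈ E.outer.support ∧ y ∈ E.outer.support
  · refine E.exists_length_lt_of_isChord_outer (isChord_sym2Mk.mpr ⟨hxy, he.1, hPxy⟩)
      fun hab => hQxy ?_
    rcases Sym2.eq_iff.mp hab with ⟨rfl, rfl⟩ | ⟨rfl, rfl⟩
    · exact ⟨E.inner.end_mem_support, E.inner.start_mem_support⟩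
    · exact ⟨E.inner.start_mem_support, E.inner.end_mem_support⟩
  by_cases hxP : x ∈ E.outer.support
  · have hyQ : y ∈ E.inner.support := hy.resolve_left fun hyP => hPxy ⟨hxP, hyP⟩
    exact E.exists_length_lt_of_adj hP hxP (fun hxQ => hQxy ⟨hxQ, hyQ⟩) hyQ
      (fun hyP => hPxy ⟨hxP, hyP⟩) hxy
  · have hxQ : x ∈ E.inner.support := hx.resolve_left hxP
    have hyP : y ∈ E.outer.support := hy.resolve_right fun hyQ => hQxy ⟨hxQ, hyQ⟩
    exact E.exists_length_lt_of_adj hP hyP (fun hyQ => hQxy ⟨hxQ, hyQ⟩) hxQ hxP hxy.symm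

lemma exists_length_lt (hch : ChordalGraph G) (hH : DeltaConvex G H) :
    ∃ E' : Ear G H, E'.length < E.length := by
  classical
  obtain ⟨E', hlt⟩ :=
    E.bypass.exists_length_lt_of_isPath hch hH (bypass_isPath _) (bypass_isPath _)
  exact ⟨E', hlt.trans_le E.length_bypass_le⟩

end Ear

lemma ChordalGraph.isEmpty_ear {G : SimpleGraph V} {H : Set V} (hch : ChordalGraph G)
    (hH : DeltaConvex G H) : IsEmpty (Ear G H) :=
  ⟨fun E => by
    induction h : E.length using Nat.strong_induction_on generalizing E with
    | _ n ih =>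
      obtain ⟨E', hlt⟩ := E.exists_length_lt hch hH
      exact ih _ (h ▸ hlt) E' rfl⟩

section TwoConnected

variable {G : SimpleGraph V}

lemma TwoConnected.exists_walk_avoiding (h2 : TwoConnected G) {a x y : V} (hx : x ≠ a)
    (hy : y ≠ a) : ∃ p : G.Walk x y, a ∉ p.support := by
  obtain ⟨p⟩ := (h2.2.2 a).preconnected ⟨x, hx⟩ ⟨y, hy⟩
  refine ⟨p.map (Embedding.induce _).toHom, fun ha => ?_⟩
  obtain ⟨⟨z, hz⟩, -, hza⟩ := List.mem_map.mp (Walk.support_map _ _ ▸ ha)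
  exact hz hza

lemma TwoConnected.nonempty_ear (h2 : TwoConnected G) {H : Set V}
    (hH : ∀ a ∈ H, ∀ b ∈ H, ∃ p : G.Walk b a, ∀ z ∈ p.support, z ∈ H)
    (hnt : H.Nontrivial) (hne : H ≠ Set.univ) : Nonempty (Ear G H) := by
  obtain ⟨z, hz⟩ := (Set.ne_univ_iff_exists_notMem H).mp hne
  obtain ⟨c, hc⟩ := hnt.nonempty
  obtain ⟨⟨⟨a, x⟩, hax⟩, -, ha, hx⟩ := (h2.2.1.preconnected c z).some.exists_boundary_dart H hc hz
  dsimp only at hax ha hx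
  obtain ⟨c', hc', hc'a⟩ := hnt.exists_ne a
  obtain ⟨p, hap⟩ := h2.exists_walk_avoiding (x := x) (fun h => hx (h ▸ ha)) hc'a
  obtain ⟨b, hb, q, hqp, hfirst⟩ := p.exists_walk_to_first_mem hc'
  have haq : a ∉ q.support := fun h => hap (hqp h)
  obtain ⟨r, hr⟩ := hH a ha b hb
  refine ⟨{
    src := a
    dst := b
    outer := .cons hax q
    inner := r
    src_ne_dst := fun h => haq (h ▸ q.end_mem_support)
    edge_notMem_outer := fun he => ?_
    eq_of_mem_outer := fun w hw hwH => ?_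
    inner_subset := hr }⟩
  · rcases List.mem_cons.mp (edges_cons hax q ▸ he) with he | he
    · rcases Sym2.eq_iff.mp he with ⟨-, rfl⟩ | ⟨h, -⟩
      exacts [hx hb, hax.ne h]
    · exact haq (q.fst_mem_support_of_mem_edges he)
  · rcases List.mem_cons.mp (support_cons hax q ▸ hw) with rfl | hw
    exacts [.inl rfl, .inr (hfirst w hw hwH)]

theorem deltaHull_eq_univ_of_adj (h2 : TwoConnected G) (hch : ChordalGraph G) {u v : V}
    (huv : G.Adj u v) : deltaHull G {u, v} = Set.univ := by
  by_contra hne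
  have hwalk : ∀ w ∈ deltaHull G {u, v},
      ∃ p : G.Walk w u, ∀ z ∈ p.support, z ∈ deltaHull G {u, v} := by
    refine fun w => exists_walk_of_mem_deltaHull ?_
    rintro s (rfl | rfl)
    · exact ⟨.nil, by simpa using subset_deltaHull (Set.mem_insert s {v})⟩
    · refine ⟨.cons huv.symm .nil, fun z hz => subset_deltaHull ?_⟩
      simp only [support_cons, support_nil, List.mem_cons, List.not_mem_nil, or_false] at hz
      rcases hz with rfl | rfl <;> simp
  have hH : ∀ a ∈ deltaHull G {u, v}, ∀ b ∈ deltaHull G {u, v},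
      ∃ p : G.Walk b a, ∀ z ∈ p.support, z ∈ deltaHull G {u, v} := by
    intro a ha b hb
    obtain ⟨p, hp⟩ := hwalk a ha
    obtain ⟨q, hq⟩ := hwalk b hb
    refine ⟨q.append p.reverse, fun z hz => ?_⟩
    rw [mem_support_append_iff, support_reverse, List.mem_reverse] at hz
    exact hz.elim (hq z) (hp z)
  have hnt : (deltaHull G {u, v}).Nontrivial :=
    ⟨u, subset_deltaHull (by simp), v, subset_deltaHull (by simp), huv.ne⟩
  obtain ⟨E⟩ := h2.nonempty_ear hH hnt hne
  exact (hch.isEmpty_ear deltaConvex_deltaHull).false E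

end TwoConnected

section Radon

variable {G : SimpleGraph V} {S : Set V}

lemma radonIndep_of_pairwise (hS : S.Pairwise fun a b => ¬ G.Adj a b) : RadonIndep G S := by
  rintro ⟨S₁, S₂, rfl, hdisj, -, -, w, hw₁, hw₂⟩
  rw [deltaHull_eq_self_of_pairwise (hS.mono Set.subset_union_left)] at hw₁
  rw [deltaHull_eq_self_of_pairwise (hS.mono Set.subset_union_right)] at hw₂
  exact hdisj.notMem_of_mem_left hw₁ hw₂

lemma radonIndep_pair (a b : V) : RadonIndep G {a, b} := by
  have hsub : ∀ T T' : Set V, T ∪ T' = {a, b} → Disjoint T T' → T'.Nonempty → T.Subsingleton := by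
    rintro T T' hTT' hdisj ⟨c, hc⟩ s hs t ht
    have hmem : ∀ z, z ∈ T ∨ z ∈ T' ↔ z = a ∨ z = b := by simpa [Set.ext_iff] using hTT'
    have hcs : c ≠ s := fun h => hdisj.notMem_of_mem_left hs (h ▸ hc)
    have hct : c ≠ t := fun h => hdisj.notMem_of_mem_left ht (h ▸ hc)
    grind
  rintro ⟨S₁, S₂, hS, hdisj, hne₁, hne₂, w, hw₁, hw₂⟩
  rw [deltaHull_eq_self_of_pairwise ((hsub S₁ S₂ hS hdisj hne₂).pairwise _)] at hw₁
  rw [deltaHull_eq_self_of_pairwise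
    ((hsub S₂ S₁ (Set.union_comm _ _ ▸ hS) hdisj.symm hne₁).pairwise _)] at hw₂
  exact hdisj.notMem_of_mem_left hw₁ hw₂

lemma RadonIndep.pairwise_not_adj (hS : RadonIndep G S) (h2 : 2 < S.ncard)
    (hedge : ∀ ⦃u v⦄, G.Adj u v → deltaHull G {u, v} = Set.univ) :
    S.Pairwise fun a b => ¬ G.Adj a b := by
  intro p hp q hq _ hpq
  obtain ⟨w, hw⟩ : (S \ {p, q}).Nonempty := by
    refine Set.nonempty_iff_ne_empty.mpr fun h => ?_
    have := Set.ncard_le_ncard (Set.sdiff_eq_empty.mp h) (Set.toFinite _)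
    have := Set.ncard_insert_le p {q}
    simp only [Set.ncard_singleton] at this
    omega
  refine hS ⟨{p, q}, S \ {p, q}, Set.union_sdiff_cancel ?_, Set.disjoint_sdiff_right,
    Set.insert_nonempty _ _, ⟨w, hw⟩, w, hedge hpq ▸ trivial, subset_deltaHull hw⟩
  rintro z (rfl | rfl) <;> assumption

end Radon

lemma bddAbove_setOf_ncard [Finite V] (P : Set V → Prop) :
    BddAbove {n | ∃ S : Set V, P S ∧ S.ncard = n} :=
  ⟨Nat.card V, by rintro _ ⟨S, -, rfl⟩; exact S.ncard_le_card⟩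

/-- If `G` is a finite simple 2-connected chordal graph, then
`r_Δ(G) = max {2, α(G)}`. -/
theorem stmt_13 {V : Type*} [Fintype V] (G : SimpleGraph V)
    (h2 : TwoConnected G) (hch : ChordalGraph G) :
    radonNumber G = max 2 (alphaNum G) := by
  refine le_antisymm (csSup_le ⟨0, ∅, radonIndep_of_pairwise (Set.pairwise_empty _),
    Set.ncard_empty V⟩ ?_) (max_le ?_ ?_)
  · rintro _ ⟨S, hS, rfl⟩
    by_cases hS2 : S.ncard ≤ 2
    · exact le_max_of_le_left hS2
    · refine le_max_of_le_right (le_csSup (bddAbove_setOf_ncard _) ⟨S, ?_, rfl⟩)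
      exact hS.pairwise_not_adj (by omega) fun _ _ => deltaHull_eq_univ_of_adj h2 hch
  · have : Nontrivial V := Finite.one_lt_card_iff_nontrivial.mp (by have := h2.1; omega)
    obtain ⟨a, b, hab⟩ := exists_pair_ne V
    exact le_csSup (bddAbove_setOf_ncard _) ⟨{a, b}, radonIndep_pair a b, Set.ncard_pair hab⟩
  · exact csSup_le_csSup (bddAbove_setOf_ncard _) ⟨0, ∅, Set.pairwise_empty _, Set.ncard_empty V⟩
      fun _ ⟨S, hS, hn⟩ => ⟨S, radonIndep_of_pairwise hS, hn⟩
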